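/- For every real h ≥ 1 and every integer k ≥ 1, the following are equivalent: (i) b(k,h) < b(k,1); (ii) F(√(1/2), k) < √(2/(2+b(k,h))). -/
import Mathlib


/-- The constants `b(j,h)`: `b(1,h) = (2h+1)/(h+1)²` and, for `j ≥ 2`,
`b(j,h) = (b(j-1,h) + (2jh+1)/(jh)²) · (jh/(jh+1))²`.  (The value at `j = 0`
is irrelevant and set to `0`.) -/
noncomputable def bGH (h : ℝ) : ℕ → ℝ
  | 0 => 0
  | 1 => (2 * h + 1) / (h + 1) ^ 2
  | (j + 2) =>
      (bGH h (j + 1) + (2 * ((j : ℝ) + 2) * h + 1) / ((((j : ℝ) + 2) * h) ^ 2)) *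
        ((((j : ℝ) + 2) * h) / (((j : ℝ) + 2) * h + 1)) ^ 2

/-- The function `F(a,k)` of Theorem 4.7. -/
noncomputable def FCY (a : ℝ) (k : ℕ) : ℝ :=
  Real.sqrt ((((k : ℝ) + 1) ^ 2 / (2 * (k : ℝ) * ((k : ℝ) + 2)) - a ^ 2) /
    (a ^ 4 - (5 / 2) * a ^ 2 + ((k : ℝ) + 1) ^ 2 / (2 * (k : ℝ) * ((k : ℝ) + 2))
      + (2 * (k : ℝ) ^ 2 + 4 * (k : ℝ) + 3) / (4 * ((k : ℝ) + 1) ^ 2)))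

lemma bGH_pos (h : ℝ) (hh : 1 ≤ h) : ∀ k, 1 ≤ k → 0 < bGH h k := by
  have h0 : 0 < h := lt_of_lt_of_le one_pos hh
  intro k
  induction k with
  | zero => omega
  | succ n ih =>
    intro _
    match n, ih with
    | 0, _ =>
      show 0 < (2 * h + 1) / (h + 1) ^ 2
      apply div_pos (by linarith) (by positivity)
    | (m + 1), ih =>
      show 0 < (bGH h (m + 1) + (2 * ((m : ℝ) + 2) * h + 1) / ((((m : ℝ) + 2) * h) ^ 2)) *
        ((((m : ℝ) + 2) * h) / (((m : ℝ) + 2) * h + 1)) ^ 2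
      have hm2 : (0:ℝ) < (m : ℝ) + 2 := by positivity
      have hb := ih (by omega)
      have h1 : 0 < (2 * ((m : ℝ) + 2) * h + 1) / ((((m : ℝ) + 2) * h) ^ 2) := by
        apply div_pos (by nlinarith) (by positivity)
      have h2 : 0 < ((((m : ℝ) + 2) * h) / (((m : ℝ) + 2) * h + 1)) ^ 2 := by
        apply pow_pos
        apply div_pos (by nlinarith) (by nlinarith)
      exact mul_pos (by linarith) h2

lemma bGH_one : ∀ k, 1 ≤ k → bGH 1 k = 1 - 1 / ((k : ℝ) + 1) ^ 2 := by
  intro k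
  induction k with
  | zero => omega
  | succ n ih =>
    intro _
    match n, ih with
    | 0, _ =>
      show (2 * 1 + 1) / (1 + 1 : ℝ) ^ 2 = _
      norm_num
    | (m + 1), ih =>
      show (bGH 1 (m + 1) + (2 * ((m : ℝ) + 2) * 1 + 1) / ((((m : ℝ) + 2) * 1) ^ 2)) *
        ((((m : ℝ) + 2) * 1) / (((m : ℝ) + 2) * 1 + 1)) ^ 2 = _
      rw [ih (by omega)]
      have hm2 : ((m : ℝ) + 2) ≠ 0 := by positivity
      have hm1 : ((m : ℝ) + 1 + 1) ≠ 0 := by positivity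
      have hm3 : ((m : ℝ) + 2 + 1) ≠ 0 := by positivity
      push_cast
      field_simp
      ring

theorem bGH_lt_iff_FCY_lt (h : ℝ) (hh : 1 ≤ h) (k : ℕ) (hk : 1 ≤ k) :
    bGH h k < bGH 1 k ↔
      FCY (Real.sqrt (1 / 2)) k < Real.sqrt (2 / (2 + bGH h k)) := by
  have hK : (1:ℝ) ≤ (k : ℝ) := by exact_mod_cast hk
  set K : ℝ := (k : ℝ) with hKdef
  have hb := bGH_pos h hh k hk
  set b : ℝ := bGH h k with hbdef
  have hK0 : K ≠ 0 := by linarith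
  have hK1 : K + 1 ≠ 0 := by linarith
  have hK2 : (0:ℝ) < K * (K + 2) := by nlinarith
  have h3m : (0:ℝ) < 3 * (K + 1) ^ 2 - 1 := by nlinarith
  -- compute FCY argument
  have hsq : (Real.sqrt (1/2)) ^ 2 = 1/2 := Real.sq_sqrt (by norm_num)
  have hsq4 : (Real.sqrt (1/2)) ^ 4 = 1/4 := by
    have : (Real.sqrt (1/2)) ^ 4 = ((Real.sqrt (1/2)) ^ 2) ^ 2 := by ring
    rw [this, hsq]; norm_num
  have harg : ((K + 1) ^ 2 / (2 * K * (K + 2)) - (Real.sqrt (1/2)) ^ 2) /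
      ((Real.sqrt (1/2)) ^ 4 - (5 / 2) * (Real.sqrt (1/2)) ^ 2 + (K + 1) ^ 2 / (2 * K * (K + 2))
        + (2 * K ^ 2 + 4 * K + 3) / (4 * (K + 1) ^ 2)) =
      2 * (K + 1) ^ 2 / (3 * (K + 1) ^ 2 - 1) := by
    rw [hsq, hsq4]
    have hden : (1/4 : ℝ) - (5 / 2) * (1/2) + (K + 1) ^ 2 / (2 * K * (K + 2))
        + (2 * K ^ 2 + 4 * K + 3) / (4 * (K + 1) ^ 2) =
        (3 * (K + 1) ^ 2 - 1) / (4 * (K + 1) ^ 2 * (K * (K + 2))) := by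
      field_simp
      ring
    have hnum : (K + 1) ^ 2 / (2 * K * (K + 2)) - (1/2 : ℝ) = 1 / (2 * (K * (K + 2))) := by
      field_simp
      ring
    rw [hden, hnum]
    rw [div_div_div_eq]
    field_simp
    ring
  have hFCY : FCY (Real.sqrt (1/2)) k = Real.sqrt (2 * (K + 1) ^ 2 / (3 * (K + 1) ^ 2 - 1)) := by
    unfold FCY
    rw [← hKdef, harg]
  rw [hFCY, bGH_one k hk, ← hKdef]
  have h2b : (0:ℝ) < 2 + b := by linarith
  rw [Real.sqrt_lt_sqrt_iff (by positivity)]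
  rw [div_lt_div_iff₀ h3m h2b]
  have hK1sq : (0:ℝ) < (K+1)^2 := by positivity
  have hone : (1/(K+1)^2) * (K+1)^2 = 1 := by field_simp
  constructor
  · intro hlt
    nlinarith [mul_pos hK1sq (sub_pos.mpr hlt), hone]
  · intro hlt
    nlinarith [hone, hK1sq]
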